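/- Let G = C_{n_1} × ... × C_{n_k} with 1 < n_1 | n_2 | ... | n_k and k ≥ 2, with generators a_1, ..., a_k. For 1 ≤ i ≤ k−1, the quotient of G by H_i = ⟨a_1, ..., a_{i−1}, a_i a_k^{n_k/n_i}, a_{i+1}, ..., a_{k−1}⟩ is cyclic of order n_k. -/

import Mathlib

/-! The shear `σ x = x · e_l (ψ (x i))` of `∏ j, ℤ/n_j`, where `ψ : ℤ/n_i → ℤ/n_l` is
multiplication by `n_l / n_i` (well defined because `n_i ∣ n_l`), is an automorphism fixing
`a_j` for `j ≠ i` and sending `a_i` to `a_i a_l^(n_l / n_i)`. It therefore maps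
`⟨a_j : j ≠ l⟩`, the kernel of the projection onto the `l`-th factor, onto `H_i`, so
`G ⧸ H_i ≅ G ⧸ ⟨a_j : j ≠ l⟩ ≅ ℤ/n_l`. -/

/-- The abelian group with invariant factors `n 0 ∣ n 1 ∣ ... ∣ n (k-1)`. -/
abbrev IG (k : ℕ) (n : Fin k → ℕ) := ∀ i : Fin k, Multiplicative (ZMod (n i))

/-- The canonical generator of the `i`-th cyclic factor. -/
abbrev gen (k : ℕ) (n : Fin k → ℕ) (i : Fin k) : IG k n :=
  Pi.mulSingle i (Multiplicative.ofAdd (1 : ZMod (n i)))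

open Subgroup

namespace Pi

variable {ι : Type*} [DecidableEq ι] {M : ι → Type*}

def shearMulEquiv [∀ j, CommGroup (M j)] {i l : ι} (hil : i ≠ l) (ψ : M i →* M l) :
    (∀ j, M j) ≃* (∀ j, M j) where
  toFun x := x * mulSingle l (ψ (x i))
  invFun x := x / mulSingle l (ψ (x i))
  left_inv x := by simp [mulSingle_eq_of_ne hil]
  right_inv x := by simp [mulSingle_eq_of_ne hil]
  map_mul' x y := by
    simp only [mul_apply, map_mul, mulSingle_mul]
    exact mul_mul_mul_comm ..

section Shear

variable [∀ j, CommGroup (M j)] {i l : ι} (hil : i ≠ l) (ψ : M i →* M l)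

theorem shearMulEquiv_mulSingle_self (a : M i) :
    shearMulEquiv hil ψ (mulSingle i a) = mulSingle i a * mulSingle l (ψ a) := by
  simp [shearMulEquiv]

theorem shearMulEquiv_mulSingle_of_ne {j : ι} (hj : j ≠ i) (a : M j) :
    shearMulEquiv hil ψ (mulSingle j a) = mulSingle j a := by
  simp [shearMulEquiv, mulSingle_eq_of_ne hj.symm]

end Shear

theorem closure_mulSingle_eq_ker_evalMonoidHom [Finite ι] [∀ j, Group (M j)] (g : ∀ j, M j)
    (hg : ∀ j, ∀ x : M j, x ∈ zpowers (g j)) (l : ι) :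
    closure ((fun j => mulSingle j (g j)) '' {j | j ≠ l}) = (evalMonoidHom M l).ker := by
  refine le_antisymm ((closure_le _).2 ?_) fun x hx => pi_mem_of_mulSingle_mem x fun j => ?_
  · rintro _ ⟨j, hj, rfl⟩
    simp [mulSingle_eq_of_ne' hj]
  · by_cases hj : j = l
    · subst hj
      rw [show x j = 1 from hx, mulSingle_one]
      exact one_mem _
    · obtain ⟨t, ht⟩ := mem_zpowers_iff.1 (hg j (x j))
      rw [← ht, mulSingle_zpow]
      exact zpow_mem (subset_closure (Set.mem_image_of_mem _ hj)) t

end Pi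

namespace ZMod

theorem mem_zpowers_ofAdd_one {n : ℕ} (x : Multiplicative (ZMod n)) :
    x ∈ zpowers (Multiplicative.ofAdd 1) := by
  obtain ⟨t, ht⟩ := intCast_surjective (Multiplicative.toAdd x)
  refine ⟨t, show _ ^ t = x from ?_⟩
  rw [← ofAdd_zsmul, zsmul_one, ht, ofAdd_toAdd]

def mulDivHom {a b : ℕ} (h : a ∣ b) : ZMod a →+ ZMod b :=
  lift a ⟨zmultiplesHom _ ((b / a : ℕ) : ZMod b), by
    simp [← Nat.cast_mul, Nat.mul_div_cancel' h]⟩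

theorem mulDivHom_one {a b : ℕ} (h : a ∣ b) : mulDivHom h 1 = ((b / a : ℕ) : ZMod b) := by
  rw [mulDivHom, ← Int.cast_one, lift_coe]
  simp

end ZMod

section StdGen

variable {ι : Type*} [DecidableEq ι] (n : ι → ℕ)

abbrev stdGen (j : ι) : ∀ j, Multiplicative (ZMod (n j)) :=
  Pi.mulSingle j (Multiplicative.ofAdd 1)

variable {n} {i l : ι}

theorem image_shearMulEquiv_stdGen (hil : i ≠ l) (hn : n i ∣ n l) :
    Pi.shearMulEquiv hil (AddMonoidHom.toMultiplicative (ZMod.mulDivHom hn)) ''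
        (stdGen n '' {j | j ≠ l}) =
      (fun j => if j = i then stdGen n i * stdGen n l ^ (n l / n i) else stdGen n j) ''
        {j | j ≠ l} := by
  rw [Set.image_image]
  refine Set.image_congr fun j _ => ?_
  split_ifs with hj
  · subst hj
    rw [Pi.shearMulEquiv_mulSingle_self, ← Pi.mulSingle_pow, ← ofAdd_nsmul]
    simp [ZMod.mulDivHom_one]
  · rw [Pi.shearMulEquiv_mulSingle_of_ne hil _ hj]

theorem nonempty_quotient_closure_stdGen_mulEquiv_zmod [Finite ι] (hil : i ≠ l)
    (hn : n i ∣ n l) :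
    Nonempty ((∀ j, Multiplicative (ZMod (n j))) ⧸ Subgroup.closure
      ((fun j => if j = i then stdGen n i * stdGen n l ^ (n l / n i) else stdGen n j) ''
        {j | j ≠ l}) ≃* Multiplicative (ZMod (n l))) := by
  set σ := Pi.shearMulEquiv (M := fun j => Multiplicative (ZMod (n j))) hil
    (AddMonoidHom.toMultiplicative (ZMod.mulDivHom hn))
  rw [← image_shearMulEquiv_stdGen hil hn, ← MulEquiv.coe_toMonoidHom, ← MonoidHom.map_closure,
    Pi.closure_mulSingle_eq_ker_evalMonoidHom _ (fun _ => ZMod.mem_zpowers_ofAdd_one) l]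
  exact ⟨(QuotientGroup.congr _ _ σ rfl).symm.trans
    (QuotientGroup.quotientKerEquivOfSurjective _ fun y => ⟨Pi.mulSingle l y, by simp⟩)⟩

end StdGen

theorem stmt_10 (k : ℕ) (n : Fin k → ℕ)
    (hdvd : ∀ i j : Fin k, i ≤ j → n i ∣ n j)
    (i : Fin k) (hi : (i : ℕ) < k - 1) :
    IsCyclic (IG k n ⧸ Subgroup.closure
        ((fun j : Fin k => if j = i then
            gen k n i * gen k n ⟨k - 1, by omega⟩ ^ (n ⟨k - 1, by omega⟩ / n i)
          else gen k n j) '' {j : Fin k | (j : ℕ) < k - 1})) ∧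
    Nat.card (IG k n ⧸ Subgroup.closure
        ((fun j : Fin k => if j = i then
            gen k n i * gen k n ⟨k - 1, by omega⟩ ^ (n ⟨k - 1, by omega⟩ / n i)
          else gen k n j) '' {j : Fin k | (j : ℕ) < k - 1})) = n ⟨k - 1, by omega⟩ := by
  set l : Fin k := ⟨k - 1, by omega⟩
  have hil : i ≠ l := fun h => by simp [h, l] at hi
  have hS : {j : Fin k | (j : ℕ) < k - 1} = {j | j ≠ l} := by
    ext j
    simp [Fin.ext_iff, l]
    omega
  obtain ⟨e⟩ := nonempty_quotient_closure_stdGen_mulEquiv_zmod hil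
    (hdvd i l (Fin.le_def.2 (by simp only [l]; omega)))
  rw [hS]
  refine ⟨isCyclic_of_surjective e.symm e.symm.surjective, ?_⟩
  rw [Nat.card_congr e.toEquiv, Nat.card_congr Multiplicative.toAdd, Nat.card_zmod]
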